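/- Let ρ be an n-qubit density matrix and let Λ_ρ be the reset channel on n-qubit matrices defined by Λ_ρ(A) = Tr(A) · ρ. Then D(Λ_ρ†) = 1, where Λ_ρ† is the Hilbert–Schmidt adjoint of Λ_ρ; i.e., every reset channel is simulable by Heisenberg propagation without increasing the number of samples. -/

import Mathlib

open Matrix BigOperators Kronecker ComplexOrder

noncomputable section

/-- The four single-qubit Pauli matrices `I, X, Y, Z`. -/
def pauli1 : Fin 4 → Matrix (Fin 2) (Fin 2) ℂ :=
  ![(1 : Matrix (Fin 2) (Fin 2) ℂ),
    !![0, 1; 1, 0],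
    !![0, -Complex.I; Complex.I, 0],
    !![1, 0; 0, -1]]

/-- The `n`-qubit Pauli matrix `σ_{s 0} ⊗ ⋯ ⊗ σ_{s (n-1)}`, as a matrix on `Fin n → Fin 2`. -/
def nPauli (n : ℕ) (s : Fin n → Fin 4) :
    Matrix (Fin n → Fin 2) (Fin n → Fin 2) ℂ :=
  Matrix.of fun x y => ∏ k : Fin n, pauli1 (s k) (x k) (y k)

/-- The stabilizer norm `D(A) = 2^{-n} Σ_{σ ∈ P_n} |Tr(σ A)|`. -/
def stabNorm {n : ℕ} (A : Matrix (Fin n → Fin 2) (Fin n → Fin 2) ℂ) : ℝ :=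
  ((2 : ℝ) ^ n)⁻¹ * ∑ s : Fin n → Fin 4, ‖(nPauli n s * A).trace‖

/-- The channel stabilizer norm `D(Λ) = max_{σ ∈ P_n} D(Λ(σ))`. -/
def chanNorm {n m : ℕ}
    (Λ : Matrix (Fin n → Fin 2) (Fin n → Fin 2) ℂ →ₗ[ℂ]
         Matrix (Fin m → Fin 2) (Fin m → Fin 2) ℂ) : ℝ :=
  ⨆ s : Fin n → Fin 4, stabNorm (Λ (nPauli n s))

/-! The Hilbert–Schmidt adjoint of the reset channel is `A ↦ Tr(Aρ) • 1`, and since the identity is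
the only Pauli matrix with nonzero trace, `D(Tr(σρ) • 1) = |Tr(σρ)|`. For a Hermitian involution `σ`
we have `(1 ± σ)ᴴ (1 ± σ) = 2 (1 ± σ)`, so positivity of `ρ` gives `0 ≤ Tr ρ ± Tr(σρ)`, i.e.
`|Tr(σρ)| ≤ Tr ρ = 1`; the identity Pauli attains the bound. -/

theorem Complex.norm_le_norm_of_neg_le_of_le {z a : ℂ} (h₁ : -a ≤ z) (h₂ : z ≤ a) :
    ‖z‖ ≤ ‖a‖ := by
  rw [Complex.le_def] at h₁ h₂
  simp only [Complex.neg_re, Complex.neg_im] at h₁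
  have hz : z.im = 0 := by linarith [h₁.2, h₂.2]
  have ha : a.im = 0 := by linarith [h₁.2, h₂.2]
  rw [← Complex.abs_re_eq_norm.2 hz, ← Complex.abs_re_eq_norm.2 ha]
  exact abs_le_abs h₂.1 (by linarith [h₁.1])

namespace Matrix

def piKronecker {ι R : Type*} [Fintype ι] [CommMonoid R] {m : ι → Type*}
    (A : ∀ k, Matrix (m k) (m k) R) : Matrix (∀ k, m k) (∀ k, m k) R :=
  of fun x y => ∏ k, A k (x k) (y k)

section piKronecker

variable {ι R : Type*} [Fintype ι] {m : ι → Type*}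

theorem piKronecker_mul [DecidableEq ι] [CommSemiring R] [∀ k, Fintype (m k)]
    (A B : ∀ k, Matrix (m k) (m k) R) :
    piKronecker A * piKronecker B = piKronecker fun k => A k * B k := by
  ext x y
  simp only [piKronecker, mul_apply, of_apply, Fintype.prod_sum, Finset.prod_mul_distrib]

theorem piKronecker_one [CommSemiring R] [∀ k, DecidableEq (m k)] :
    piKronecker (fun k => (1 : Matrix (m k) (m k) R)) = 1 := by
  ext x y
  by_cases h : x = y
  · subst h; simp [piKronecker]
  · obtain ⟨k, hk⟩ := Function.ne_iff.mp h
    rw [one_apply_ne h]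
    exact Finset.prod_eq_zero (Finset.mem_univ k) (one_apply_ne hk)

theorem trace_piKronecker [DecidableEq ι] [CommSemiring R] [∀ k, Fintype (m k)]
    (A : ∀ k, Matrix (m k) (m k) R) : (piKronecker A).trace = ∏ k, (A k).trace := by
  simp only [trace, diag, piKronecker, of_apply, Fintype.prod_sum]

theorem conjTranspose_piKronecker [CommSemiring R] [StarRing R]
    (A : ∀ k, Matrix (m k) (m k) R) :
    (piKronecker A)ᴴ = piKronecker fun k => (A k)ᴴ := by
  ext x y
  simp [piKronecker, star_prod]

end piKronecker

variable {m R : Type*} [Fintype m]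

theorem PosSemidef.trace_conjTranspose_mul_self_mul_nonneg [CommRing R] [PartialOrder R]
    [StarRing R] [StarOrderedRing R] {ρ : Matrix m m R} (hρ : ρ.PosSemidef) (B : Matrix m m R) :
    0 ≤ (Bᴴ * B * ρ).trace := by
  rw [mul_assoc, trace_mul_comm]
  exact (hρ.mul_mul_conjTranspose_same B).trace_nonneg

theorem IsHermitian.conjTranspose_mul_self_one_add [DecidableEq m] [CommRing R] [StarRing R]
    {σ : Matrix m m R} (hσ : σ.IsHermitian) (hσσ : σ * σ = 1) :
    (1 + σ)ᴴ * (1 + σ) = 2 • (1 + σ) := by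
  rw [conjTranspose_add, conjTranspose_one, hσ.eq, add_mul, mul_add, mul_add, hσσ]
  noncomm_ring

theorem IsHermitian.neg_trace_le_trace_mul [DecidableEq m] {σ ρ : Matrix m m ℂ}
    (hσ : σ.IsHermitian) (hσσ : σ * σ = 1) (hρ : ρ.PosSemidef) :
    -ρ.trace ≤ (σ * ρ).trace := by
  have h := hρ.trace_conjTranspose_mul_self_mul_nonneg (1 + σ)
  rw [hσ.conjTranspose_mul_self_one_add hσσ, smul_mul, trace_smul, add_mul, one_mul, trace_add,
    ← Nat.cast_smul_eq_nsmul ℝ, Nat.cast_ofNat] at h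
  rw [neg_le_iff_add_nonneg']
  exact (smul_nonneg_iff_nonneg_of_pos_left two_pos).mp h

theorem IsHermitian.norm_trace_mul_le_norm_trace [DecidableEq m] {σ ρ : Matrix m m ℂ}
    (hσ : σ.IsHermitian) (hσσ : σ * σ = 1) (hρ : ρ.PosSemidef) :
    ‖(σ * ρ).trace‖ ≤ ‖ρ.trace‖ := by
  refine Complex.norm_le_norm_of_neg_le_of_le (hσ.neg_trace_le_trace_mul hσσ hρ) ?_
  have h := hσ.neg.neg_trace_le_trace_mul (by rwa [neg_mul_neg]) hρ
  rwa [neg_mul, trace_neg, neg_le_neg_iff] at h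

theorem apply_eq_trace_mul_smul_one_of_adjoint_reset [DecidableEq m] [CommRing R]
    {ρ : Matrix m m R} {Λd : Matrix m m R → Matrix m m R}
    (hadj : ∀ A B, (A * (B.trace • ρ)).trace = (Λd A * B).trace) (A : Matrix m m R) :
    Λd A = (A * ρ).trace • 1 := by
  rw [ext_iff_trace_mul_right]
  intro B
  simp [← hadj, mul_comm]

end Matrix

theorem pauli1_conjTranspose (i : Fin 4) : (pauli1 i)ᴴ = pauli1 i := by
  fin_cases i <;> ext x y <;> fin_cases x <;> fin_cases y <;> simp [pauli1]

theorem pauli1_mul_self (i : Fin 4) : pauli1 i * pauli1 i = 1 := by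
  fin_cases i <;> ext x y <;> fin_cases x <;> fin_cases y <;>
    simp [pauli1, mul_apply, Fin.sum_univ_two, one_apply]

theorem trace_pauli1 (i : Fin 4) : (pauli1 i).trace = if i = 0 then 2 else 0 := by
  fin_cases i <;> simp [pauli1, trace, Fin.sum_univ_two]

theorem nPauli_eq_piKronecker (n : ℕ) (s : Fin n → Fin 4) :
    nPauli n s = piKronecker fun k => pauli1 (s k) := rfl

theorem nPauli_zero (n : ℕ) : nPauli n 0 = 1 :=
  piKronecker_one

theorem nPauli_mul_self {n : ℕ} (s : Fin n → Fin 4) : nPauli n s * nPauli n s = 1 := by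
  simp only [nPauli_eq_piKronecker, piKronecker_mul, pauli1_mul_self, piKronecker_one]

theorem nPauli_isHermitian {n : ℕ} (s : Fin n → Fin 4) : (nPauli n s).IsHermitian := by
  simp only [IsHermitian, nPauli_eq_piKronecker, conjTranspose_piKronecker, pauli1_conjTranspose]

theorem trace_nPauli {n : ℕ} (s : Fin n → Fin 4) :
    (nPauli n s).trace = if s = 0 then 2 ^ n else 0 := by
  simp [nPauli_eq_piKronecker, trace_piKronecker, trace_pauli1, Finset.prod_ite_zero, funext_iff]

theorem stabNorm_smul_one {n : ℕ} (c : ℂ) :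
    stabNorm (c • 1 : Matrix (Fin n → Fin 2) (Fin n → Fin 2) ℂ) = ‖c‖ := by
  simp only [stabNorm, Algebra.mul_smul_comm, mul_one, trace_smul, trace_nPauli, apply_ite,
    smul_eq_mul, mul_zero, Complex.norm_mul, norm_pow, Complex.norm_ofNat, norm_zero,
    Finset.sum_ite_eq', Finset.mem_univ, ↓reduceIte]
  field_simp

theorem chanNorm_reset_adjoint_general (n : ℕ)
    (ρ : Matrix (Fin n → Fin 2) (Fin n → Fin 2) ℂ)
    (hpsd : ρ.PosSemidef) (htr : ρ.trace = 1)
    (Λ Λd : Matrix (Fin n → Fin 2) (Fin n → Fin 2) ℂ →ₗ[ℂ]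
            Matrix (Fin n → Fin 2) (Fin n → Fin 2) ℂ)
    (hΛ : ∀ A : Matrix (Fin n → Fin 2) (Fin n → Fin 2) ℂ, Λ A = A.trace • ρ)
    (hadj : ∀ A B : Matrix (Fin n → Fin 2) (Fin n → Fin 2) ℂ,
      (A * Λ B).trace = (Λd A * B).trace) :
    chanNorm Λd = 1 := by
  have hΛd (s : Fin n → Fin 4) : stabNorm (Λd (nPauli n s)) = ‖(nPauli n s * ρ).trace‖ := by
    rw [apply_eq_trace_mul_smul_one_of_adjoint_reset (Λd := Λd) (fun A B => by rw [← hΛ, hadj]),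
      stabNorm_smul_one]
  have hle (s : Fin n → Fin 4) : ‖(nPauli n s * ρ).trace‖ ≤ 1 := by
    simpa [htr] using (nPauli_isHermitian s).norm_trace_mul_le_norm_trace (nPauli_mul_self s) hpsd
  simp only [chanNorm, hΛd]
  refine le_antisymm (ciSup_le hle) (le_ciSup_of_le (Finite.bddAbove_range _) 0 ?_)
  simp [nPauli_zero, htr]

/-- For a reset channel `Λ_ρ(A) = Tr(A) ρ` with `ρ` a density matrix, the
Hilbert–Schmidt adjoint satisfies `D(Λ_ρ†) = 1`. -/
theorem chanNorm_reset_adjoint (n : ℕ) (hn : 1 ≤ n)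
    (ρ : Matrix (Fin n → Fin 2) (Fin n → Fin 2) ℂ)
    (hpsd : ρ.PosSemidef) (htr : ρ.trace = 1)
    (Λ Λd : Matrix (Fin n → Fin 2) (Fin n → Fin 2) ℂ →ₗ[ℂ]
            Matrix (Fin n → Fin 2) (Fin n → Fin 2) ℂ)
    (hΛ : ∀ A : Matrix (Fin n → Fin 2) (Fin n → Fin 2) ℂ, Λ A = A.trace • ρ)
    (hadj : ∀ A B : Matrix (Fin n → Fin 2) (Fin n → Fin 2) ℂ,
      (A * Λ B).trace = (Λd A * B).trace) :
    chanNorm Λd = 1 :=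
  chanNorm_reset_adjoint_general n ρ hpsd htr Λ Λd hΛ hadj
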